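/- arXiv:2402.05199 — 2 statements merged into one kernel-verified Lean document; each statement's English description precedes it below -/
import Mathlib

section
/- The integral ∫₀^∞ (ln x)² / (√x (1+x)) dx equals π³. -/
open Real MeasureTheory Set
open scoped Nat

/-!
The substitution `x = t²` turns the integral into `8 ∫₀^∞ (log t)² / (1 + t²) dt`, and the
inversion `t ↦ 1/t` shows that the parts over `(0, 1)` and `(1, ∞)` agree. On `(0, 1)` expand
`1 / (1 + t²) = ∑ (-t²)ⁿ` and integrate termwise, using `∫₀¹ tᵃ (-log t)ᵏ dt = k! / (a + 1)ᵏ⁺¹`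
(substitute `t = e⁻ᵘ` to get a Gamma integral): the result is `2 β(3) = π³ / 16`, where
`β(3) = ∑ (-1)ⁿ / (2n + 1)³ = π³ / 32`.
-/

section ChangeOfVariables

variable {E : Type*} [NormedAddCommGroup E] [NormedSpace ℝ E]

lemma image_exp_neg_Ioi_zero : (fun u => exp (-u)) '' Ioi 0 = Ioo 0 1 := by
  ext t
  constructor
  · rintro ⟨u, hu, rfl⟩
    exact ⟨exp_pos _, exp_lt_one_iff.mpr (neg_lt_zero.mpr hu)⟩
  · rintro ⟨ht0, ht1⟩
    exact ⟨-log t, neg_pos.mpr (log_neg ht0 ht1), by simp [exp_log ht0]⟩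

lemma hasDerivWithinAt_exp_neg (s : Set ℝ) (u : ℝ) :
    HasDerivWithinAt (fun u => exp (-u)) (-exp (-u)) s u := by
  simpa using (hasDerivAt_neg u).exp.hasDerivWithinAt

lemma injOn_exp_neg (s : Set ℝ) : InjOn (fun u => exp (-u)) s :=
  fun _ _ _ _ h => neg_injective (exp_injective h)

lemma integrableOn_Ioo_zero_one_iff_comp_exp_neg (g : ℝ → E) :
    IntegrableOn g (Ioo 0 1) ↔ IntegrableOn (fun u => exp (-u) • g (exp (-u))) (Ioi 0) := by
  rw [← image_exp_neg_Ioi_zero, integrableOn_image_iff_integrableOn_abs_deriv_smul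
    measurableSet_Ioi (fun u _ => hasDerivWithinAt_exp_neg _ u) (injOn_exp_neg _)]
  simp only [abs_neg, abs_of_pos (exp_pos _)]

lemma integral_Ioo_zero_one_eq_comp_exp_neg (g : ℝ → E) :
    ∫ t in Ioo 0 1, g t = ∫ u in Ioi 0, exp (-u) • g (exp (-u)) := by
  rw [← image_exp_neg_Ioi_zero, integral_image_eq_integral_abs_deriv_smul
    measurableSet_Ioi (fun u _ => hasDerivWithinAt_exp_neg _ u) (injOn_exp_neg _)]
  simp only [abs_neg, abs_of_pos (exp_pos _)]

lemma image_inv_Ioi_one : (fun x : ℝ => x⁻¹) '' Ioi 1 = Ioo 0 1 := by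
  rw [image_inv_eq_inv, inv_Ioi₀ zero_lt_one, inv_one]

lemma integrableOn_Ioo_zero_one_iff_comp_inv (g : ℝ → E) :
    IntegrableOn g (Ioo 0 1) ↔ IntegrableOn (fun x => (x ^ 2)⁻¹ • g x⁻¹) (Ioi 1) := by
  rw [← image_inv_Ioi_one, integrableOn_image_iff_integrableOn_abs_deriv_smul measurableSet_Ioi
    (fun x hx => (hasDerivAt_inv (zero_lt_one.trans hx).ne').hasDerivWithinAt) inv_injective.injOn]
  simp only [abs_neg, abs_inv, abs_sq]

lemma integral_Ioo_zero_one_eq_comp_inv (g : ℝ → E) :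
    ∫ t in Ioo 0 1, g t = ∫ x in Ioi 1, (x ^ 2)⁻¹ • g x⁻¹ := by
  rw [← image_inv_Ioi_one, integral_image_eq_integral_abs_deriv_smul measurableSet_Ioi
    (fun x hx => (hasDerivAt_inv (zero_lt_one.trans hx).ne').hasDerivWithinAt) inv_injective.injOn]
  simp only [abs_neg, abs_inv, abs_sq]

end ChangeOfVariables

lemma exp_neg_smul_rpow_mul_neg_log_pow (a : ℝ) (k : ℕ) (u : ℝ) :
    exp (-u) • (exp (-u) ^ a * (-log (exp (-u))) ^ k)
      = u ^ (k : ℝ) * exp (-(a + 1) * u ^ (1 : ℝ)) := by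
  rw [smul_eq_mul, log_exp, neg_neg, ← exp_mul, rpow_natCast, rpow_one,
    show -(a + 1) * u = -u * a + -u by ring, exp_add]
  ring

lemma integrableOn_rpow_mul_neg_log_pow {a : ℝ} (ha : -1 < a) (k : ℕ) :
    IntegrableOn (fun t => t ^ a * (-log t) ^ k) (Ioo 0 1) := by
  rw [integrableOn_Ioo_zero_one_iff_comp_exp_neg]
  simp only [exp_neg_smul_rpow_mul_neg_log_pow]
  exact integrableOn_rpow_mul_exp_neg_mul_rpow (by linarith [k.cast_nonneg (α := ℝ)]) one_pos
    (by linarith)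

lemma integral_rpow_mul_neg_log_pow {a : ℝ} (ha : -1 < a) (k : ℕ) :
    ∫ t in Ioo 0 1, t ^ a * (-log t) ^ k = k ! / (a + 1) ^ (k + 1) := by
  rw [integral_Ioo_zero_one_eq_comp_exp_neg]
  simp only [exp_neg_smul_rpow_mul_neg_log_pow]
  rw [integral_rpow_mul_exp_neg_mul_rpow one_pos (by linarith [k.cast_nonneg (α := ℝ)])
    (by linarith), div_one, one_div_one, div_one, Gamma_nat_eq_factorial, rpow_neg (by linarith),
    ← Nat.cast_add_one, rpow_natCast]
  ring

lemma integrableOn_pow_mul_log_sq (n : ℕ) :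
    IntegrableOn (fun t => t ^ n * log t ^ 2) (Ioo 0 1) := by
  simpa only [rpow_natCast, neg_sq] using
    integrableOn_rpow_mul_neg_log_pow (a := n) (by linarith [n.cast_nonneg (α := ℝ)]) 2

lemma integral_pow_mul_log_sq (n : ℕ) :
    ∫ t in Ioo 0 1, t ^ n * log t ^ 2 = 2 / (n + 1) ^ 3 := by
  have h := integral_rpow_mul_neg_log_pow (a := n) (by linarith [n.cast_nonneg (α := ℝ)]) 2
  simp only [rpow_natCast, neg_sq] at h
  rw [h]
  norm_num

lemma injective_two_mul_add_one : Function.Injective (fun n : ℕ => 2 * n + 1) :=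
  fun _ _ h => by simpa using h

lemma hasSum_neg_one_pow_div_two_mul_add_one_pow_three :
    HasSum (fun n : ℕ => (-1 : ℝ) ^ n / (2 * n + 1) ^ 3) (π ^ 3 / 32) := by
  have heven : ∀ m ∉ range (fun n : ℕ => 2 * n + 1),
      1 / (m : ℝ) ^ 3 * sin (π * m / 2) = 0 := by
    intro m hm
    obtain ⟨k, rfl⟩ : Even m := Nat.not_odd_iff_even.mp fun ⟨k, hk⟩ => hm ⟨k, hk.symm⟩
    rw [show π * ((k + k : ℕ) : ℝ) / 2 = k * π by push_cast; ring, sin_nat_mul_pi, mul_zero]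
  convert (injective_two_mul_add_one.hasSum_iff heven).mpr hasSum_L_function_mod_four_eval_three
    using 1
  ext n
  rw [Function.comp_apply, show π * ((2 * n + 1 : ℕ) : ℝ) / 2 = n * π + π / 2 by push_cast; ring,
    sin_add_pi_div_two, cos_nat_mul_pi]
  push_cast
  ring

lemma summable_one_div_two_mul_add_one_pow {p : ℕ} (hp : 1 < p) :
    Summable (fun n : ℕ => 1 / (2 * n + 1 : ℝ) ^ p) := by
  simpa [Function.comp_def] using
    (summable_one_div_nat_pow.mpr hp).comp_injective injective_two_mul_add_one

lemma hasSum_neg_one_pow_mul_pow_mul_log_sq {t : ℝ} (ht : t ∈ Ioo 0 1) :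
    HasSum (fun n : ℕ => (-1) ^ n * (t ^ (2 * n) * log t ^ 2)) (log t ^ 2 / (1 + t ^ 2)) := by
  have hr : |-t ^ 2| < 1 := by
    rw [abs_neg, abs_of_nonneg (sq_nonneg t)]
    exact pow_lt_one₀ ht.1.le ht.2 two_ne_zero
  have hterm : (fun n : ℕ => (-1) ^ n * (t ^ (2 * n) * log t ^ 2))
      = fun n => (-t ^ 2) ^ n * log t ^ 2 := by
    funext n
    rw [neg_pow, pow_mul]
    ring
  rw [hterm, div_eq_inv_mul, ← sub_neg_eq_add]
  exact (hasSum_geometric_of_abs_lt_one hr).mul_right _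

lemma integral_log_sq_div_one_add_sq_Ioo_zero_one :
    ∫ t in Ioo 0 1, log t ^ 2 / (1 + t ^ 2) = π ^ 3 / 16 := by
  set F : ℕ → ℝ → ℝ := fun n t => (-1) ^ n * (t ^ (2 * n) * log t ^ 2)
  have hF_int (n : ℕ) : Integrable (F n) (volume.restrict (Ioo 0 1)) :=
    (integrableOn_pow_mul_log_sq (2 * n)).const_mul _
  have hF_integral (n : ℕ) : ∫ t in Ioo 0 1, F n t = 2 * ((-1) ^ n / (2 * n + 1) ^ 3) := by
    rw [integral_const_mul, integral_pow_mul_log_sq]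
    push_cast
    ring
  have hF_norm (n : ℕ) : ∫ t in Ioo 0 1, ‖F n t‖ = 2 * (1 / (2 * n + 1) ^ 3) := by
    have hnorm : ∀ t ∈ Ioo (0 : ℝ) 1, ‖F n t‖ = t ^ (2 * n) * log t ^ 2 := fun t ht => by
      rw [norm_mul, norm_pow, norm_neg, norm_one, one_pow, one_mul]
      exact norm_of_nonneg (mul_nonneg (pow_nonneg ht.1.le _) (sq_nonneg _))
    rw [setIntegral_congr_fun measurableSet_Ioo hnorm, integral_pow_mul_log_sq]
    push_cast
    ring
  have hseries : HasSum (fun n => ∫ t in Ioo 0 1, F n t) (π ^ 3 / 16) := by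
    rw [show π ^ 3 / 16 = 2 * (π ^ 3 / 32) by ring]
    simpa only [hF_integral] using hasSum_neg_one_pow_div_two_mul_add_one_pow_three.mul_left 2
  have hsummable : Summable fun n => ∫ t in Ioo 0 1, ‖F n t‖ := by
    simpa only [hF_norm] using (summable_one_div_two_mul_add_one_pow (by norm_num)).mul_left 2
  rw [setIntegral_congr_fun measurableSet_Ioo
    fun t ht => (hasSum_neg_one_pow_mul_pow_mul_log_sq ht).tsum_eq.symm]
  exact (hasSum_integral_of_summable_integral_norm hF_int hsummable).unique hseries

lemma inv_sq_smul_log_sq_div_one_add_inv_sq {x : ℝ} (hx : x ≠ 0) :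
    (x ^ 2)⁻¹ • (log x⁻¹ ^ 2 / (1 + x⁻¹ ^ 2)) = log x ^ 2 / (1 + x ^ 2) := by
  rw [smul_eq_mul, log_inv, neg_sq]
  field_simp
  ring

lemma integrableOn_log_sq_div_one_add_sq_Ioo_zero_one :
    IntegrableOn (fun t => log t ^ 2 / (1 + t ^ 2)) (Ioo 0 1) := by
  refine (integrableOn_pow_mul_log_sq 0).mono'
    (Measurable.aestronglyMeasurable (by fun_prop)) (Filter.Eventually.of_forall fun t => ?_)
  rw [pow_zero, one_mul, norm_of_nonneg (by positivity)]
  exact div_le_self (sq_nonneg _) (le_add_of_nonneg_right (sq_nonneg t))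

lemma integral_log_sq_div_one_add_sq_Ioi_zero :
    ∫ t in Ioi 0, log t ^ 2 / (1 + t ^ 2) = π ^ 3 / 8 := by
  have hinv : ∀ x ∈ Ioi (1 : ℝ), (x ^ 2)⁻¹ • (log x⁻¹ ^ 2 / (1 + x⁻¹ ^ 2))
      = log x ^ 2 / (1 + x ^ 2) := fun x hx =>
    inv_sq_smul_log_sq_div_one_add_inv_sq (zero_lt_one.trans hx).ne'
  have hIoo := integrableOn_log_sq_div_one_add_sq_Ioo_zero_one
  have hIoi : IntegrableOn (fun t => log t ^ 2 / (1 + t ^ 2)) (Ioi 1) :=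
    ((integrableOn_Ioo_zero_one_iff_comp_inv _).mp hIoo).congr_fun hinv measurableSet_Ioi
  have hIoi_eq :
      ∫ t in Ioi 1, log t ^ 2 / (1 + t ^ 2) = ∫ t in Ioo 0 1, log t ^ 2 / (1 + t ^ 2) := by
    rw [integral_Ioo_zero_one_eq_comp_inv]
    exact (setIntegral_congr_fun measurableSet_Ioi hinv).symm
  rw [← Ioc_union_Ioi_eq_Ioi zero_le_one, setIntegral_union (Ioc_disjoint_Ioi le_rfl)
    measurableSet_Ioi (Iff.mpr integrableOn_Ioc_iff_integrableOn_Ioo hIoo) hIoi,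
    integral_Ioc_eq_integral_Ioo, hIoi_eq, integral_log_sq_div_one_add_sq_Ioo_zero_one]
  ring

theorem stmt_3 :
    ∫ x in Set.Ioi (0:ℝ), (Real.log x) ^ 2 / (Real.sqrt x * (1 + x)) = π ^ 3 := by
  have hsubst : ∀ t ∈ Ioi (0 : ℝ), (|2| * t ^ ((2 : ℝ) - 1)) •
      (log (t ^ (2 : ℝ)) ^ 2 / (√(t ^ (2 : ℝ)) * (1 + t ^ (2 : ℝ))))
        = 8 * (log t ^ 2 / (1 + t ^ 2)) := fun t ht => by
    have ht0 : t ≠ 0 := ht.ne'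
    rw [rpow_two, show (2 : ℝ) - 1 = 1 by norm_num, rpow_one, log_pow, sqrt_sq ht.le,
      smul_eq_mul]
    field_simp
    ring
  rw [← integral_comp_rpow_Ioi _ two_ne_zero, setIntegral_congr_fun measurableSet_Ioi hsubst,
    integral_const_mul, integral_log_sq_div_one_add_sq_Ioi_zero]
  ring
end

section
/- For real s with 0 < s < 1, ∫₀^∞ x^(s-1) cos(x) dx = Γ(s)·cos(πs/2), where the integral is interpreted as an improper Riemann integral lim_{T→∞} ∫₀^T x^(s-1) cos(x) dx. -/
/-!
Laplace's trick: for `x > 0`, `x ^ (s - 1) = Γ(1 - s)⁻¹ ∫₀^∞ t ^ (-s) e ^ (-x t) dt`. On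
`(0, T] × (0, ∞)` the integrand `t ^ (-s) e ^ (-x t) cos x` is absolutely integrable, so Fubini and
the elementary primitive of `e ^ (-x t) cos x` give `∫₀^T x ^ (s - 1) cos x dx =
Γ(1 - s)⁻¹ ∫₀^∞ t ^ (-s) (t + e ^ (-T t) (sin T - t cos T)) / (1 + t²) dt`.
The `e ^ (-T t)` part is at most `Γ(1 - s) T ^ (s - 1) → 0`, and writing
`1 / (1 + t²) = ∫₀^∞ e ^ (-(1 + t²) y) dy` turns the main part into a product of two Gamma
integrals, `∫₀^∞ t ^ (1 - s) / (1 + t²) dt = Γ(s/2) Γ(1 - s/2) / 2`. Two applications of Euler's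
reflection formula identify `Γ(1 - s)⁻¹ Γ(s/2) Γ(1 - s/2) / 2` with `Γ(s) cos(π s / 2)`.
-/

open Real MeasureTheory Filter

open Set

lemma integrableOn_rpow_neg_mul_exp_neg_mul {s x : ℝ} (hs : s < 1) (hx : 0 < x) :
    IntegrableOn (fun t : ℝ => t ^ (-s) * exp (-(x * t))) (Ioi 0) := by
  refine (integrableOn_rpow_mul_exp_neg_mul_rpow (s := -s) (by linarith) one_pos hx).congr_fun
    (fun t _ => ?_) measurableSet_Ioi
  simp [neg_mul]

lemma integral_rpow_neg_mul_exp_neg_mul {s x : ℝ} (hs : s < 1) (hx : 0 < x) :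
    ∫ t in Ioi 0, t ^ (-s) * exp (-(x * t)) = Gamma (1 - s) * x ^ (s - 1) := by
  have h := integral_rpow_mul_exp_neg_mul_Ioi (a := 1 - s) (by linarith) hx
  rw [show 1 - s - 1 = -s by ring] at h
  rw [h, one_div, inv_rpow hx.le, ← rpow_neg hx.le, mul_comm, neg_sub]

lemma hasDerivAt_exp_neg_mul_mul_sin_sub_mul_cos (t x : ℝ) :
    HasDerivAt (fun x => exp (-(x * t)) * (sin x - t * cos x) / (1 + t ^ 2))
      (exp (-(x * t)) * cos x) x := by
  have hexp : HasDerivAt (fun x => exp (-(x * t))) (-t * exp (-(x * t))) x := by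
    simpa [mul_comm] using ((hasDerivAt_mul_const t).neg).exp
  have htrig : HasDerivAt (fun x => sin x - t * cos x) (cos x - t * -sin x) x :=
    (hasDerivAt_sin x).sub ((hasDerivAt_cos x).const_mul t)
  refine ((hexp.mul htrig).div_const (1 + t ^ 2)).congr_deriv ?_
  field_simp
  ring

lemma integral_exp_neg_mul_mul_cos (t T : ℝ) :
    ∫ x in (0 : ℝ)..T, exp (-(x * t)) * cos x =
      (exp (-(T * t)) * (sin T - t * cos T) + t) / (1 + t ^ 2) := by
  rw [intervalIntegral.integral_eq_sub_of_hasDerivAt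
    (fun x _ => hasDerivAt_exp_neg_mul_mul_sin_sub_mul_cos t x)
    ((by fun_prop : Continuous _).intervalIntegrable _ _)]
  simp only [zero_mul, neg_zero, exp_zero, sin_zero, cos_zero, mul_one, zero_sub, mul_neg,
    one_mul]
  ring

lemma abs_sin_sub_mul_cos_le (T t : ℝ) : |sin T - t * cos T| ≤ 1 + t ^ 2 := by
  have hsq : (sin T - t * cos T) ^ 2 ≤ 1 + t ^ 2 := by
    nlinarith [sin_sq_add_cos_sq T, sq_nonneg (t * sin T + cos T)]
  exact abs_le_of_sq_le_sq (by nlinarith [sq_nonneg t]) (by positivity)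

lemma integrable_rpow_neg_mul_exp_neg_mul_mul_cos {s T : ℝ} (hs0 : 0 < s) (hs1 : s < 1) :
    Integrable (Function.uncurry fun x t : ℝ => t ^ (-s) * exp (-(x * t)) * cos x)
      ((volume.restrict (Ioc 0 T)).prod (volume.restrict (Ioi 0))) := by
  have hkernel : Integrable (Function.uncurry fun x t : ℝ => t ^ (-s) * exp (-(x * t)))
      ((volume.restrict (Ioc 0 T)).prod (volume.restrict (Ioi 0))) := by
    have hmeas : AEStronglyMeasurable (Function.uncurry fun x t : ℝ => t ^ (-s) * exp (-(x * t)))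
        ((volume.restrict (Ioc 0 T)).prod (volume.restrict (Ioi 0))) :=
      (by fun_prop : Measurable fun p : ℝ × ℝ => p.2 ^ (-s) * exp (-(p.1 * p.2)))
        |>.aestronglyMeasurable
    refine (integrable_prod_iff hmeas).2 ⟨?_, ?_⟩
    · filter_upwards [ae_restrict_mem measurableSet_Ioc] with x hx
      exact integrableOn_rpow_neg_mul_exp_neg_mul hs1 hx.1
    · refine ((intervalIntegral.intervalIntegrable_rpow' (a := 0) (b := T) (r := s - 1)
        (by linarith)).1.const_mul (Gamma (1 - s))).congr ?_
      filter_upwards [ae_restrict_mem measurableSet_Ioc] with x hx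
      rw [← integral_rpow_neg_mul_exp_neg_mul hs1 hx.1]
      refine setIntegral_congr_fun measurableSet_Ioi (fun t ht => ?_)
      simp only [Function.uncurry_apply_pair]
      rw [norm_of_nonneg (by have := rpow_nonneg (le_of_lt ht) (-s); positivity)]
  exact hkernel.mul_bdd (c := 1) (continuous_cos.comp continuous_fst).aestronglyMeasurable
    (Eventually.of_forall fun p => abs_cos_le_one p.1)

lemma integral_rpow_mul_cos_eq_integral_Ioi {s T : ℝ} (hs0 : 0 < s) (hs1 : s < 1) (hT : 0 ≤ T) :
    ∫ x in (0 : ℝ)..T, x ^ (s - 1) * cos x = (Gamma (1 - s))⁻¹ *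
      ∫ t in Ioi 0, t ^ (-s) * ((exp (-(T * t)) * (sin T - t * cos T) + t) / (1 + t ^ 2)) := by
  have hΓ : Gamma (1 - s) ≠ 0 := (Gamma_pos_of_pos (by linarith)).ne'
  calc ∫ x in (0 : ℝ)..T, x ^ (s - 1) * cos x
      = ∫ x in Ioc 0 T, (Gamma (1 - s))⁻¹ * ∫ t in Ioi 0, t ^ (-s) * exp (-(x * t)) * cos x := by
        rw [intervalIntegral.integral_of_le hT]
        refine setIntegral_congr_fun measurableSet_Ioc (fun x hx => ?_)
        rw [integral_mul_const, integral_rpow_neg_mul_exp_neg_mul hs1 hx.1]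
        field_simp
    _ = (Gamma (1 - s))⁻¹ * ∫ t in Ioi 0, ∫ x in Ioc 0 T, t ^ (-s) * exp (-(x * t)) * cos x := by
        rw [integral_const_mul,
          integral_integral_swap (integrable_rpow_neg_mul_exp_neg_mul_mul_cos hs0 hs1)]
    _ = _ := by
        congr 1
        refine setIntegral_congr_fun measurableSet_Ioi (fun t _ => ?_)
        rw [← integral_exp_neg_mul_mul_cos, intervalIntegral.integral_of_le hT,
          ← integral_const_mul]
        simp only [mul_assoc]

lemma norm_rpow_neg_mul_exp_mul_sin_sub_mul_cos_div_le {s T t : ℝ} (ht : 0 < t) :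
    ‖t ^ (-s) * (exp (-(T * t)) * (sin T - t * cos T) / (1 + t ^ 2))‖ ≤
      t ^ (-s) * exp (-(T * t)) := by
  have hpos : 0 < 1 + t ^ 2 := by positivity
  rw [norm_mul, norm_div, norm_mul, norm_of_nonneg (rpow_nonneg ht.le _),
    norm_of_nonneg (exp_pos _).le, norm_of_nonneg hpos.le]
  refine mul_le_mul_of_nonneg_left ?_ (rpow_nonneg ht.le _)
  rw [mul_div_assoc]
  exact mul_le_of_le_one_right (exp_pos _).le ((div_le_one hpos).2 (abs_sin_sub_mul_cos_le T t))

lemma integrableOn_rpow_neg_mul_exp_mul_sin_sub_mul_cos_div {s T : ℝ} (hs1 : s < 1)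
    (hT : 0 < T) :
    IntegrableOn (fun t => t ^ (-s) * (exp (-(T * t)) * (sin T - t * cos T) / (1 + t ^ 2)))
      (Ioi 0) := by
  refine (integrableOn_rpow_neg_mul_exp_neg_mul hs1 hT).mono' (by fun_prop) ?_
  filter_upwards [ae_restrict_mem measurableSet_Ioi] with t ht
  exact norm_rpow_neg_mul_exp_mul_sin_sub_mul_cos_div_le ht

lemma tendsto_integral_rpow_neg_mul_exp_mul_sin_sub_mul_cos_div {s : ℝ} (hs1 : s < 1) :
    Tendsto
      (fun T => ∫ t in Ioi 0, t ^ (-s) * (exp (-(T * t)) * (sin T - t * cos T) / (1 + t ^ 2)))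
      atTop (nhds 0) := by
  have hbound : Tendsto (fun T : ℝ => Gamma (1 - s) * T ^ (s - 1)) atTop (nhds 0) := by
    simpa [neg_sub] using
      (tendsto_rpow_neg_atTop (y := 1 - s) (by linarith)).const_mul (Gamma (1 - s))
  refine squeeze_zero_norm' ?_ hbound
  filter_upwards [eventually_gt_atTop 0] with T hT
  rw [← integral_rpow_neg_mul_exp_neg_mul hs1 hT]
  refine norm_integral_le_of_norm_le (integrableOn_rpow_neg_mul_exp_neg_mul hs1 hT) ?_
  filter_upwards [ae_restrict_mem measurableSet_Ioi] with t ht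
  exact norm_rpow_neg_mul_exp_mul_sin_sub_mul_cos_div_le ht

lemma integral_mul_exp_neg_one_add_sq_mul (c t : ℝ) :
    ∫ y in Ioi 0, c * exp (-(1 + t ^ 2) * y) = c / (1 + t ^ 2) := by
  rw [integral_const_mul, integral_exp_mul_Ioi (by nlinarith [sq_nonneg t]) 0, mul_zero, exp_zero,
    neg_div_neg_eq, mul_one_div]

lemma integrableOn_rpow_mul_exp_neg_one_add_sq_mul {a y : ℝ} (ha : -1 < a) (hy : 0 < y) :
    IntegrableOn (fun t : ℝ => t ^ a * exp (-(1 + t ^ 2) * y)) (Ioi 0) := by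
  refine IntegrableOn.congr_fun
    ((integrableOn_rpow_mul_exp_neg_mul_sq hy ha).const_mul (exp (-y))) (fun t _ => ?_)
    measurableSet_Ioi
  rw [mul_left_comm, ← exp_add]
  ring_nf

lemma integral_rpow_mul_exp_neg_one_add_sq_mul {a y : ℝ} (ha : -1 < a) (hy : 0 < y) :
    ∫ t in Ioi 0, t ^ a * exp (-(1 + t ^ 2) * y) =
      Gamma ((a + 1) / 2) / 2 * (exp (-y) * y ^ ((1 - a) / 2 - 1)) := by
  calc ∫ t in Ioi 0, t ^ a * exp (-(1 + t ^ 2) * y)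
      = exp (-y) * ∫ t in Ioi 0, t ^ a * exp (-y * t ^ (2 : ℝ)) := by
        rw [← integral_const_mul]
        refine setIntegral_congr_fun measurableSet_Ioi (fun t _ => ?_)
        rw [rpow_two, mul_left_comm, ← exp_add]
        ring_nf
    _ = _ := by
        rw [integral_rpow_mul_exp_neg_mul_rpow two_pos ha hy,
          show -(a + 1) / 2 = (1 - a) / 2 - 1 by ring]
        ring

lemma integrable_rpow_mul_exp_neg_one_add_sq_mul {a : ℝ} (ha0 : -1 < a) (ha1 : a < 1) :
    Integrable (Function.uncurry fun t y : ℝ => t ^ a * exp (-(1 + t ^ 2) * y))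
      ((volume.restrict (Ioi 0)).prod (volume.restrict (Ioi 0))) := by
  have hmeas : AEStronglyMeasurable
      (Function.uncurry fun t y : ℝ => t ^ a * exp (-(1 + t ^ 2) * y))
      ((volume.restrict (Ioi 0)).prod (volume.restrict (Ioi 0))) :=
    (by fun_prop : Measurable fun p : ℝ × ℝ => p.1 ^ a * exp (-(1 + p.1 ^ 2) * p.2))
      |>.aestronglyMeasurable
  refine (integrable_prod_iff' hmeas).2 ⟨?_, ?_⟩
  · filter_upwards [ae_restrict_mem measurableSet_Ioi] with y hy
    exact integrableOn_rpow_mul_exp_neg_one_add_sq_mul ha0 hy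
  · refine ((GammaIntegral_convergent (s := (1 - a) / 2) (by linarith)).const_mul
      (Gamma ((a + 1) / 2) / 2)).congr ?_
    filter_upwards [ae_restrict_mem measurableSet_Ioi] with y hy
    rw [← integral_rpow_mul_exp_neg_one_add_sq_mul ha0 hy]
    refine setIntegral_congr_fun measurableSet_Ioi (fun t ht => ?_)
    simp only [Function.uncurry_apply_pair]
    rw [norm_of_nonneg (by have := rpow_nonneg (le_of_lt ht) a; positivity)]

lemma integrableOn_rpow_div_one_add_sq {a : ℝ} (ha0 : -1 < a) (ha1 : a < 1) :
    IntegrableOn (fun t : ℝ => t ^ a / (1 + t ^ 2)) (Ioi 0) :=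
  (integrable_rpow_mul_exp_neg_one_add_sq_mul ha0 ha1).integral_prod_left.congr
    (Eventually.of_forall fun t => integral_mul_exp_neg_one_add_sq_mul (t ^ a) t)

lemma integral_rpow_div_one_add_sq {a : ℝ} (ha0 : -1 < a) (ha1 : a < 1) :
    ∫ t in Ioi 0, t ^ a / (1 + t ^ 2) = Gamma ((a + 1) / 2) * Gamma ((1 - a) / 2) / 2 := by
  calc ∫ t in Ioi 0, t ^ a / (1 + t ^ 2)
      = ∫ y in Ioi 0, ∫ t in Ioi 0, t ^ a * exp (-(1 + t ^ 2) * y) := by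
        simp_rw [← integral_mul_exp_neg_one_add_sq_mul]
        exact integral_integral_swap (integrable_rpow_mul_exp_neg_one_add_sq_mul ha0 ha1)
    _ = ∫ y in Ioi 0, Gamma ((a + 1) / 2) / 2 * (exp (-y) * y ^ ((1 - a) / 2 - 1)) :=
        setIntegral_congr_fun measurableSet_Ioi
          (fun y hy => integral_rpow_mul_exp_neg_one_add_sq_mul ha0 hy)
    _ = Gamma ((a + 1) / 2) * Gamma ((1 - a) / 2) / 2 := by
        rw [integral_const_mul, ← Gamma_eq_integral (by linarith)]
        ring

lemma Gamma_mul_Gamma_one_sub_mul_cos {s : ℝ} (h : cos (π * s / 2) ≠ 0) :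
    Gamma s * Gamma (1 - s) * (2 * cos (π * s / 2)) = Gamma (s / 2) * Gamma (1 - s / 2) := by
  rw [Gamma_mul_Gamma_one_sub, Gamma_mul_Gamma_one_sub, show π * s = 2 * (π * s / 2) by ring,
    sin_two_mul, show π * (s / 2) = π * s / 2 by ring]
  by_cases hsin : sin (π * s / 2) = 0
  · simp [hsin]
  · field_simp

theorem stmt_6 (s : ℝ) (hs0 : 0 < s) (hs1 : s < 1) :
    Tendsto (fun T : ℝ => ∫ x in (0:ℝ)..T, x ^ (s - 1) * Real.cos x) atTop
      (nhds (Real.Gamma s * Real.cos (π * s / 2))) := by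
  have hΓ : Gamma (1 - s) ≠ 0 := (Gamma_pos_of_pos (by linarith)).ne'
  have hcos : cos (π * s / 2) ≠ 0 :=
    (cos_pos_of_mem_Ioo ⟨by nlinarith [pi_pos], by nlinarith [pi_pos]⟩).ne'
  set I : ℝ := ∫ t in Ioi 0, t ^ (1 - s) / (1 + t ^ 2) with hI_def
  have hI : (Gamma (1 - s))⁻¹ * I = Gamma s * cos (π * s / 2) := by
    rw [hI_def, integral_rpow_div_one_add_sq (by linarith) (by linarith), inv_mul_eq_iff_eq_mul₀ hΓ,
      show (1 - s + 1) / 2 = 1 - s / 2 by ring, show (1 - (1 - s)) / 2 = s / 2 by ring,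
      mul_comm, ← Gamma_mul_Gamma_one_sub_mul_cos hcos]
    ring
  have hsplit : ∀ T > 0, ∫ x in (0 : ℝ)..T, x ^ (s - 1) * cos x = (Gamma (1 - s))⁻¹ *
      ((∫ t in Ioi 0, t ^ (-s) * (exp (-(T * t)) * (sin T - t * cos T) / (1 + t ^ 2))) + I) := by
    intro T hT
    rw [integral_rpow_mul_cos_eq_integral_Ioi hs0 hs1 hT.le, ← integral_add
      (integrableOn_rpow_neg_mul_exp_mul_sin_sub_mul_cos_div hs1 hT)
      (integrableOn_rpow_div_one_add_sq (by linarith) (by linarith))]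
    congr 1
    refine setIntegral_congr_fun measurableSet_Ioi (fun t ht => ?_)
    rw [rpow_sub ht, rpow_one, rpow_neg ht.le]
    field_simp
  rw [← hI, ← zero_add I]
  refine Tendsto.congr' ?_
    (((tendsto_integral_rpow_neg_mul_exp_mul_sin_sub_mul_cos_div hs1).add_const I).const_mul _)
  filter_upwards [eventually_gt_atTop 0] with T hT
  exact (hsplit T hT).symm
end
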